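/- Let W₀(q,p) = (1/π)·exp(−(q²+p²)) be the Wigner function of the harmonic-oscillator ground state and W₁(q,p) = (1/π)·(2(q²+p²) − 1)·exp(−(q²+p²)) the Wigner function of the first excited state. For a real scale parameter a with 0 < |a| < 1, the overlap integral ∫∫_{ℝ²} W₁(q,p) · a⁻²·W₀(q/a, p/a) dq dp is strictly negative. -/

import Mathlib

/-!
The product `W1(x) · a⁻² W0(x/a)` is the radial function `(2ρ - 1) e^{-cρ} / (π a)²` of
`ρ = q² + p²`, with `c = 1 + a⁻²`. In polar coordinates its integral is `2π / (π a)²` times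
`∫₀^∞ r (2r² - 1) e^{-cr²} dr = (2 - c) / (2c²)`, which is negative exactly when `c > 2`,
i.e. when `|a| < 1`.
-/

open Real MeasureTheory

/-- Wigner function of the harmonic-oscillator ground state. -/
noncomputable def W0 (q p : ℝ) : ℝ := (1 / π) * Real.exp (-(q ^ 2 + p ^ 2))

/-- Wigner function of the first excited state. -/
noncomputable def W1 (q p : ℝ) : ℝ :=
  (1 / π) * (2 * (q ^ 2 + p ^ 2) - 1) * Real.exp (-(q ^ 2 + p ^ 2))

open Set Filter Topology

theorem integral_comp_sq_add_sq {E : Type*} [NormedAddCommGroup E] [NormedSpace ℝ E]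
    (f : ℝ → E) :
    ∫ x : ℝ × ℝ, f (x.1 ^ 2 + x.2 ^ 2) = (2 * π) • ∫ r in Ioi 0, r • f (r ^ 2) := by
  rw [← integral_comp_polarCoord_symm, polarCoord_target, Measure.volume_eq_prod,
    ← Measure.prod_restrict]
  simp_rw [polarCoord_symm_apply, mul_pow, ← mul_add, cos_sq_add_sin_sq, mul_one]
  rw [integral_fun_fst (f := fun r => r • f (r ^ 2)), measureReal_restrict_apply_univ,
    Real.volume_real_Ioo_of_le (by linarith [pi_pos])]
  ring_nf

theorem integrable_pow_mul_exp_neg_mul_sq {b : ℝ} (hb : 0 < b) (n : ℕ) :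
    Integrable fun x : ℝ => x ^ n * exp (-b * x ^ 2) := by
  simpa using integrable_rpow_mul_exp_neg_mul_sq hb (s := n) (by linarith [n.cast_nonneg (α := ℝ)])

section Antiderivative

variable (c : ℝ)

theorem hasDerivAt_sub_sq_div_mul_exp_neg_mul_sq (hc : c ≠ 0) (r : ℝ) :
    HasDerivAt (fun r => ((c - 2) / (2 * c ^ 2) - r ^ 2 / c) * exp (-c * r ^ 2))
      (r * ((2 * r ^ 2 - 1) * exp (-c * r ^ 2))) r := by
  refine HasDerivAt.congr_deriv
    ((((hasDerivAt_pow 2 r).div_const c).const_sub _).mul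
      ((hasDerivAt_pow 2 r).const_mul (-c)).exp) ?_
  field_simp
  ring

theorem tendsto_sub_sq_div_mul_exp_neg_mul_sq_atTop (hc : 0 < c) :
    Tendsto (fun r => ((c - 2) / (2 * c ^ 2) - r ^ 2 / c) * exp (-c * r ^ 2)) atTop (𝓝 0) := by
  have hsq : Tendsto (fun r : ℝ => c * r ^ 2) atTop atTop :=
    (tendsto_pow_atTop two_ne_zero).const_mul_atTop hc
  have h0 := (tendsto_pow_mul_exp_neg_atTop_nhds_zero 0).comp hsq
  have h1 := (tendsto_pow_mul_exp_neg_atTop_nhds_zero 1).comp hsq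
  convert (h0.const_mul ((c - 2) / (2 * c ^ 2))).sub (h1.const_mul (c ^ 2)⁻¹) using 1
  · ext r
    simp only [Function.comp_apply, pow_zero, pow_one, one_mul, neg_mul]
    field_simp
  · simp

theorem integral_Ioi_mul_two_mul_sq_sub_one_mul_exp_neg_mul_sq (hc : 0 < c) :
    ∫ r in Ioi 0, r * ((2 * r ^ 2 - 1) * exp (-c * r ^ 2)) = (2 - c) / (2 * c ^ 2) := by
  have hint : IntegrableOn (fun r : ℝ => r * ((2 * r ^ 2 - 1) * exp (-c * r ^ 2))) (Ioi 0) := by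
    refine (((integrable_pow_mul_exp_neg_mul_sq hc 3).const_mul 2).sub
      (integrable_pow_mul_exp_neg_mul_sq hc 1)).integrableOn.congr_fun
        (fun r _ => ?_) measurableSet_Ioi
    simp only [Pi.sub_apply]
    ring
  rw [integral_Ioi_of_hasDerivAt_of_tendsto'
    (fun r _ => hasDerivAt_sub_sq_div_mul_exp_neg_mul_sq c hc.ne' r) hint
    (tendsto_sub_sq_div_mul_exp_neg_mul_sq_atTop c hc)]
  norm_num
  ring

end Antiderivative

theorem W1_mul_inv_sq_mul_W0_div (a q p : ℝ) (ha : a ≠ 0) :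
    W1 q p * (a ^ 2)⁻¹ * W0 (q / a) (p / a) =
      (π ^ 2 * a ^ 2)⁻¹ *
        ((2 * (q ^ 2 + p ^ 2) - 1) * exp (-(1 + (a ^ 2)⁻¹) * (q ^ 2 + p ^ 2))) := by
  have hexp : exp (-(q ^ 2 + p ^ 2)) * exp (-((q / a) ^ 2 + (p / a) ^ 2)) =
      exp (-(1 + (a ^ 2)⁻¹) * (q ^ 2 + p ^ 2)) := by
    rw [← exp_add]
    congr 1
    field_simp
    ring
  rw [W0, W1, ← hexp]
  field_simp

theorem wigner_scaling_overlap_neg_of_lt_one (a : ℝ) (ha : 0 < |a|) (ha1 : |a| < 1) :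
    (∫ x : ℝ × ℝ, W1 x.1 x.2 * (a ^ 2)⁻¹ * W0 (x.1 / a) (x.2 / a)) < 0 := by
  have ha0 : a ≠ 0 := abs_pos.mp ha
  have ha2 : a ^ 2 < 1 := by simpa using (sq_lt_one_iff_abs_lt_one a).mpr ha1
  have hc : 2 < 1 + (a ^ 2)⁻¹ := by linarith [(one_lt_inv₀ (by positivity)).mpr ha2]
  simp_rw [W1_mul_inv_sq_mul_W0_div a _ _ ha0]
  set c := 1 + (a ^ 2)⁻¹
  rw [integral_const_mul, integral_comp_sq_add_sq (fun s => (2 * s - 1) * exp (-c * s))]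
  simp only [smul_eq_mul]
  rw [integral_Ioi_mul_two_mul_sq_sub_one_mul_exp_neg_mul_sq c (by linarith)]
  exact mul_neg_of_pos_of_neg (by positivity) <|
    mul_neg_of_pos_of_neg (by positivity) (div_neg_of_neg_of_pos (by linarith) (by positivity))
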